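/- Let T ⊆ ℝⁿ be a closed regular set, I ⊆ ℤ₊ⁿ a finite regular set of multi-indices, and g = (g_i)_{i∈I} with g_0 = 1. The following are equivalent: (a) there exists f ∈ L¹(T, dt) with f ≥ 0 a.e., ∫_T |t^i| f(t) dt < ∞ for all i ∈ I, and ∫_T t^i f(t) dt = g_i for all i ∈ I; (b) the Riesz functional φ_g : P_I → ℝ satisfies φ_g(p) > 0 for every nonzero p ∈ P_I with p(t) ≥ 0 for all t ∈ T. -/

import Mathlib

open MeasureTheory

/-- `P_I`: the linear span of the monomials `X^i`, `i ∈ I`, in `ℝ[X₁,…,Xₙ]`. -/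
noncomputable def PIdx (n : ℕ) (I : Finset (Fin n →₀ ℕ)) :
    Submodule ℝ (MvPolynomial (Fin n) ℝ) :=
  Submodule.span ℝ {q | ∃ i ∈ I, q = MvPolynomial.monomial i 1}

/-- The Riesz functional `φ_g` associated to `g = (g_i)_{i ∈ I}`: on `P_I` it sends
`Σ_{i ∈ I} c_i X^i` to `Σ_{i ∈ I} g_i c_i`. -/
noncomputable def riesz (n : ℕ) (I : Finset (Fin n →₀ ℕ)) (g : I → ℝ)
    (p : MvPolynomial (Fin n) ℝ) : ℝ :=
  ∑ i : I, g i * MvPolynomial.coeff i.1 p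

/-- The monomial function `t ^ i = t₁^{i₁} ⋯ tₙ^{iₙ}` on `ℝⁿ`. -/
noncomputable def monoF (n : ℕ) (i : Fin n →₀ ℕ) (t : EuclideanSpace ℝ (Fin n)) : ℝ :=
  ∏ k, t k ^ i k

/-- A set `T ⊆ ℝⁿ` is regular if it is nonempty and for every `t ∈ T` and `ε > 0` the
Lebesgue measure of `{x ∈ T : ‖x - t‖ < ε}` is positive. -/
def RegularSet (n : ℕ) (T : Set (EuclideanSpace ℝ (Fin n))) : Prop :=
  T.Nonempty ∧ ∀ t ∈ T, ∀ ε > (0 : ℝ), 0 < volume {x ∈ T | ‖x - t‖ < ε}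

/-- A finite set `I` of multi-indices is regular if it is nonempty and for every `i ∈ I` the
set `σ_i = {j : j k = 0 or j k = i k for each k}` is contained in `I`. -/
def RegularIdx (n : ℕ) (I : Finset (Fin n →₀ ℕ)) : Prop :=
  I.Nonempty ∧ ∀ i ∈ I, ∀ j : Fin n →₀ ℕ, (∀ k, j k = 0 ∨ j k = i k) → j ∈ I

/-!
Identify a density `f` with its moment vector `m(f) = (∫_T t^i f)_{i ∈ I}` and a polynomial
`p ∈ P_I` with its coefficient vector `c`, so that `φ_g(p) = ⟪c, g⟫` and `∫_T p f = ⟪m(f), c⟫`.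

(a) ⇒ (b): `∫_T p f ≥ 0`, with equality only if `p f = 0` a.e. on `T`. The zero set of a nonzero
polynomial is Lebesgue-null, so `f` would vanish a.e., contradicting `∫_T f = g_0 = 1`.

(b) ⇒ (a): Since `T` is regular, a polynomial that is negative at a point of `T` has negative
integral against the indicator of a small neighbourhood of that point. Hence the dual of the
moment cone `C` is the cone `P` of coefficient vectors of polynomials nonnegative on `T`, and
`P* = closure C`. Strict positivity of `g` on `P \ {0}`, with compactness of `P ∩ sphere`, puts `g`
in the interior of `P*`; in finite dimensions a convex set and its closure have the same interior,
so `g ∈ C`.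
-/

open Set Filter Topology
open scoped RealInnerProductSpace

theorem MeasureTheory.volume_eq_zero_of_ae_volume_slice_cons {n : ℕ}
    {A : Set (Fin (n + 1) → ℝ)} (hA : MeasurableSet A)
    (h : ∀ᵐ y : Fin n → ℝ, volume {x : ℝ | Fin.cons x y ∈ A} = 0) : volume A = 0 := by
  let e := MeasurableEquiv.piFinSuccAbove (fun _ : Fin (n + 1) => ℝ) 0
  have hB : MeasurableSet (e.symm ⁻¹' A) := e.symm.measurable hA
  have := (volume_preserving_piFinSuccAbove (fun _ : Fin (n + 1) => ℝ) 0).measure_preimage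
    hB.nullMeasurableSet
  rw [show e ⁻¹' (e.symm ⁻¹' A) = A from e.toEquiv.preimage_symm_preimage A] at this
  rw [this, Measure.volume_eq_prod, Measure.prod_apply_symm hB]
  refine (lintegral_congr_ae ?_).trans lintegral_zero
  filter_upwards [h] with y hy
  simpa [e, preimage, Fin.consEquiv] using hy

theorem MvPolynomial.ae_eval_ne_zero {n : ℕ} {p : MvPolynomial (Fin n) ℝ} (hp : p ≠ 0) :
    ∀ᵐ x : Fin n → ℝ, eval x p ≠ 0 := by
  induction n with
  | zero =>
    obtain ⟨c, rfl⟩ := C_surjective (Fin 0) p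
    exact Eventually.of_forall fun x => by simpa using hp
  | succ n ih =>
    -- Viewing `p` as a polynomial in `x 0` over `MvPolynomial (Fin n) ℝ`, one of its coefficients
    -- is nonzero; off the null zero set of that coefficient, the slice has finitely many roots.
    set q := finSuccEquiv ℝ n p
    have hq : q ≠ 0 := by simpa [q] using hp
    obtain ⟨k, hk⟩ : ∃ k, q.coeff k ≠ 0 := by
      by_contra! h
      exact hq (Polynomial.ext h)
    simp only [ae_iff, ne_eq, not_not]
    refine volume_eq_zero_of_ae_volume_slice_cons
      (isClosed_eq (continuous_eval p) continuous_const).measurableSet ?_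
    filter_upwards [ih hk] with y hy
    have hqy : q.map (eval y) ≠ 0 := fun h => hy <| by
      simpa using congrArg (Polynomial.coeff · k) h
    simp only [eval_eq_eval_mv_eval']
    exact (Polynomial.finite_setOfPred_isRoot hqy).measure_zero _

theorem Convex.interior_closure_eq_interior {V : Type*} [NormedAddCommGroup V]
    [NormedSpace ℝ V] [FiniteDimensional ℝ V] {s : Set V} (hs : Convex ℝ s) :
    interior (closure s) = interior s := by
  rcases (interior s).eq_empty_or_nonempty with h | h
  · rw [h, ← not_nonempty_iff_eq_empty, hs.closure.interior_nonempty_iff_affineSpan_eq_top]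
    rw [← not_nonempty_iff_eq_empty, hs.interior_nonempty_iff_affineSpan_eq_top] at h
    refine fun htop => h (eq_top_iff.2 (htop.symm.le.trans (affineSpan_le.2 ?_)))
    exact closure_minimal (subset_affineSpan ℝ s) (AffineSubspace.closed_of_finiteDimensional _)
  · exact hs.interior_closure_eq_interior_of_nonempty_interior h

namespace ProperCone

variable {E : Type*} [NormedAddCommGroup E] [InnerProductSpace ℝ E]

theorem innerDual_closure [CompleteSpace E] (s : Set E) : innerDual (closure s) = innerDual s :=
  le_antisymm (innerDual_le_innerDual subset_closure) fun y hy =>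
    mem_innerDual.2 fun _ hx =>
      closure_minimal (t := {z | 0 ≤ ⟪z, y⟫}) (fun _ hz => hy hz)
        (isClosed_le continuous_const (continuous_id.inner continuous_const)) hx

theorem coe_innerDual_innerDual_pointedCone [CompleteSpace E] (C : PointedCone ℝ E) :
    (innerDual (innerDual (C : Set E) : Set E) : Set E) = closure C := by
  rw [← innerDual_closure (C : Set E)]
  exact congrArg ((↑) : ProperCone ℝ E → Set E)
    (innerDual_innerDual (Submodule.closure C : ProperCone ℝ E))

theorem mem_interior_innerDual_of_inner_pos [FiniteDimensional ℝ E] {K : Set E}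
    (hK : IsClosed K) (hsmul : ∀ a : ℝ, 0 ≤ a → ∀ x ∈ K, a • x ∈ K) {g : E}
    (hg : ∀ x ∈ K, x ≠ 0 → 0 < ⟪x, g⟫) : g ∈ interior (innerDual K : Set E) := by
  have hcompact : IsCompact (K ∩ Metric.sphere 0 1) := (isCompact_sphere 0 1).inter_left hK
  have hnear : ∀ᶠ y in 𝓝 g, ∀ x ∈ K ∩ Metric.sphere 0 1, 0 < ⟪x, y⟫ := by
    refine hcompact.eventually_forall_of_forall_eventually fun x hx => ?_
    exact (isOpen_lt continuous_const (continuous_snd.inner continuous_fst)).mem_nhds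
      (hg x hx.1 (ne_zero_of_mem_unit_sphere ⟨x, hx.2⟩))
  rw [mem_interior_iff_mem_nhds]
  filter_upwards [hnear] with y hy
  refine mem_innerDual.2 fun x hx => ?_
  rcases eq_or_ne x 0 with rfl | hx0
  · simp
  have hxn : 0 < ‖x‖ := norm_pos_iff.2 hx0
  have hunit : ‖x‖⁻¹ • x ∈ K ∩ Metric.sphere 0 1 :=
    ⟨hsmul _ (inv_nonneg.2 hxn.le) x hx, by simp [norm_smul, hxn.ne']⟩
  have := hy _ hunit
  rw [real_inner_smul_left] at this
  exact (pos_of_mul_pos_right this (inv_nonneg.2 hxn.le)).le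

end ProperCone

section Moments

variable {X ι : Type*} [MeasurableSpace X] (μ : Measure X) (φ : ι → X → ℝ)

def IsMomentDensity (f : X → ℝ) : Prop :=
  0 ≤ᵐ[μ] f ∧ ∀ i, Integrable (fun x => φ i x * f x) μ

noncomputable def moments (f : X → ℝ) : EuclideanSpace ℝ ι :=
  WithLp.toLp 2 fun i => ∫ x, φ i x * f x ∂μ

variable {μ φ}

theorem IsMomentDensity.add {f g : X → ℝ} (hf : IsMomentDensity μ φ f)
    (hg : IsMomentDensity μ φ g) : IsMomentDensity μ φ (f + g) :=
  ⟨by filter_upwards [hf.1, hg.1] with x hfx hgx using add_nonneg hfx hgx,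
    fun i => ((hf.2 i).add (hg.2 i)).congr (ae_of_all _ fun x => by simp [mul_add])⟩

theorem IsMomentDensity.const_smul {f : X → ℝ} (hf : IsMomentDensity μ φ f) {a : ℝ}
    (ha : 0 ≤ a) : IsMomentDensity μ φ (a • f) :=
  ⟨by filter_upwards [hf.1] with x hfx using smul_nonneg ha hfx,
    fun i => ((hf.2 i).const_mul a).congr (ae_of_all _ fun x => by simp [mul_left_comm])⟩

theorem moments_add {f g : X → ℝ} (hf : IsMomentDensity μ φ f) (hg : IsMomentDensity μ φ g) :
    moments μ φ (f + g) = moments μ φ f + moments μ φ g := by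
  ext i
  simp only [moments, Pi.add_apply, mul_add, PiLp.add_apply]
  exact integral_add (hf.2 i) (hg.2 i)

variable (μ φ)

theorem moments_const_smul (f : X → ℝ) (a : ℝ) :
    moments μ φ (a • f) = a • moments μ φ f := by
  ext i
  simp only [moments, Pi.smul_apply, mul_smul_comm, PiLp.smul_apply, integral_smul]

end Moments

section NonnegCone

variable {X ι : Type*} [Fintype ι] (φ : ι → X → ℝ)

def nonnegCone (S : Set X) : Set (EuclideanSpace ℝ ι) := {c | ∀ x ∈ S, 0 ≤ ∑ i, c i * φ i x}

theorem isClosed_nonnegCone (S : Set X) : IsClosed (nonnegCone φ S) := by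
  simp only [nonnegCone, ofPred_forall]
  exact isClosed_biInter fun x _ => isClosed_le continuous_const (by fun_prop)

theorem smul_mem_nonnegCone (S : Set X) (a : ℝ) (ha : 0 ≤ a) (c : EuclideanSpace ℝ ι)
    (hc : c ∈ nonnegCone φ S) : a • c ∈ nonnegCone φ S := fun x hx => by
  simpa [mul_assoc, ← Finset.mul_sum] using mul_nonneg ha (hc x hx)

theorem sum_mul_mul_eq_sum_mul (c : EuclideanSpace ℝ ι) (f : X → ℝ) :
    (fun x => (∑ i, c i * φ i x) * f x) = fun x => ∑ i, c i * (φ i x * f x) :=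
  funext fun x => by simp only [Finset.sum_mul, mul_assoc]

end NonnegCone

section MomentCone

variable {X ι : Type*} [MeasurableSpace X] [Fintype ι] (μ : Measure X) (φ : ι → X → ℝ)

def momentCone : PointedCone ℝ (EuclideanSpace ℝ ι) where
  carrier := {v | ∃ f, IsMomentDensity μ φ f ∧ moments μ φ f = v}
  add_mem' := by
    rintro _ _ ⟨f, hf, rfl⟩ ⟨g, hg, rfl⟩
    exact ⟨f + g, hf.add hg, moments_add hf hg⟩
  zero_mem' := ⟨0, ⟨EventuallyLE.rfl, fun i => by simp⟩, by ext; simp [moments]⟩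
  smul_mem' := by
    rintro ⟨a, ha⟩ _ ⟨f, hf, rfl⟩
    exact ⟨a • f, hf.const_smul ha, moments_const_smul μ φ f a⟩

variable {μ φ}

theorem IsMomentDensity.integrable_sum_mul {f : X → ℝ} (hf : IsMomentDensity μ φ f)
    (c : EuclideanSpace ℝ ι) : Integrable (fun x => (∑ i, c i * φ i x) * f x) μ := by
  rw [sum_mul_mul_eq_sum_mul]
  exact integrable_finsetSum _ fun i _ => (hf.2 i).const_mul (c i)

theorem inner_moments {f : X → ℝ} (hf : IsMomentDensity μ φ f) (c : EuclideanSpace ℝ ι) :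
    ⟪moments μ φ f, c⟫ = ∫ x, (∑ i, c i * φ i x) * f x ∂μ := by
  rw [sum_mul_mul_eq_sum_mul, integral_finsetSum _ fun i _ => (hf.2 i).const_mul (c i)]
  simp [PiLp.inner_apply, moments, integral_const_mul]

theorem inner_moments_pos {S : Set X} (hS : ∀ᵐ x ∂μ, x ∈ S) {c : EuclideanSpace ℝ ι}
    (hc : c ∈ nonnegCone φ S) (hc0 : ∀ᵐ x ∂μ, ∑ i, c i * φ i x ≠ 0) {f : X → ℝ}
    (hf : IsMomentDensity μ φ f) (hf0 : ¬ f =ᵐ[μ] 0) : 0 < ⟪moments μ φ f, c⟫ := by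
  have hnn : 0 ≤ᵐ[μ] fun x => (∑ i, c i * φ i x) * f x := by
    filter_upwards [hS, hf.1] with x hx hfx using mul_nonneg (hc x hx) hfx
  rw [inner_moments hf]
  refine (integral_nonneg_of_ae hnn).lt_of_ne fun h0 => hf0 ?_
  filter_upwards [(integral_eq_zero_iff_of_nonneg_ae hnn (hf.integrable_sum_mul c)).1 h0.symm,
    hc0] with x hx hcx
  exact (mul_eq_zero.1 hx).resolve_left hcx

variable [TopologicalSpace X] [OpensMeasurableSpace X] [LocallyCompactSpace X]
  [IsFiniteMeasureOnCompacts μ]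

theorem exists_isMomentDensity_inner_moments_neg (hφ : ∀ i, Continuous (φ i))
    {c : EuclideanSpace ℝ ι} {x₀ : X} (hx₀ : x₀ ∈ μ.support) (hneg : ∑ i, c i * φ i x₀ < 0) :
    ∃ f, IsMomentDensity μ φ f ∧ ⟪moments μ φ f, c⟫ < 0 := by
  set h : X → ℝ := fun x => ∑ i, c i * φ i x
  have hh : Continuous h := by fun_prop
  obtain ⟨K, hK, hx₀K, hKneg⟩ := exists_compact_subset (isOpen_lt hh continuous_const) hneg
  set U := interior K
  have hU : MeasurableSet U := isOpen_interior.measurableSet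
  have hUneg : ∀ x ∈ U, h x < 0 := fun x hx => hKneg (interior_subset hx)
  have hintegrable : ∀ g : X → ℝ, Continuous g → IntegrableOn g U μ := fun g hg =>
    hg.continuousOn.integrableOn_of_subset_isCompact hK hU interior_subset
      ((measure_mono interior_subset).trans_lt hK.measure_lt_top).ne
  have hmul : ∀ g : X → ℝ, (fun x => g x * U.indicator 1 x) = U.indicator g := fun g =>
    funext fun x => by by_cases hx : x ∈ U <;> simp [hx]
  have hf : IsMomentDensity μ φ (U.indicator 1) :=
    ⟨ae_of_all _ (indicator_nonneg fun _ _ => zero_le_one), fun i => by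
      rw [hmul]; exact (integrable_indicator_iff hU).2 (hintegrable _ (hφ i))⟩
  refine ⟨_, hf, ?_⟩
  have hsupport : Function.support (fun x => -h x) ∩ U = U :=
    inter_eq_right.2 fun x hx => neg_ne_zero.2 (hUneg x hx).ne
  rw [inner_moments hf, hmul h, integral_indicator hU, ← neg_pos, ← integral_neg,
    setIntegral_pos_iff_support_of_nonneg_ae
      ((ae_restrict_mem hU).mono fun x hx => neg_nonneg.2 (hUneg x hx).le)
      (hintegrable h hh).neg, hsupport]
  exact (Measure.mem_support_iff_forall x₀).1 hx₀ U (isOpen_interior.mem_nhds hx₀K)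

theorem coe_innerDual_momentCone (hφ : ∀ i, Continuous (φ i)) {S : Set X}
    (hS : ∀ᵐ x ∂μ, x ∈ S) (hSμ : S ⊆ μ.support) :
    (ProperCone.innerDual (momentCone μ φ : Set (EuclideanSpace ℝ ι)) : Set _) =
      nonnegCone φ S := by
  ext c
  simp only [SetLike.mem_coe, ProperCone.mem_innerDual]
  constructor
  · intro hc x hx
    by_contra! hneg
    obtain ⟨f, hf, hlt⟩ := exists_isMomentDensity_inner_moments_neg hφ (hSμ hx) hneg
    exact hlt.not_ge (hc ⟨f, hf, rfl⟩)
  · rintro hc _ ⟨f, hf, rfl⟩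
    rw [inner_moments hf]
    exact integral_nonneg_of_ae <| by
      filter_upwards [hS, hf.1] with x hx hfx using mul_nonneg (hc x hx) hfx

theorem mem_momentCone_of_inner_pos (hφ : ∀ i, Continuous (φ i)) {S : Set X}
    (hS : ∀ᵐ x ∂μ, x ∈ S) (hSμ : S ⊆ μ.support) {g : EuclideanSpace ℝ ι}
    (hg : ∀ c ∈ nonnegCone φ S, c ≠ 0 → 0 < ⟪c, g⟫) : g ∈ momentCone μ φ := by
  have h := ProperCone.mem_interior_innerDual_of_inner_pos (isClosed_nonnegCone φ S)
    (smul_mem_nonnegCone φ S) hg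
  rw [← coe_innerDual_momentCone hφ hS hSμ, ProperCone.coe_innerDual_innerDual_pointedCone,
    (momentCone μ φ).convex.interior_closure_eq_interior] at h
  exact interior_subset h

end MomentCone

section Polynomial

variable {n : ℕ} {I : Finset (Fin n →₀ ℕ)}

theorem continuous_monoF (i : Fin n →₀ ℕ) : Continuous (monoF n i) := by
  unfold monoF; fun_prop

@[simp]
theorem monoF_zero (t : EuclideanSpace ℝ (Fin n)) : monoF n 0 t = 1 := by
  simp [monoF]

theorem PIdx_eq_restrictSupport :
    PIdx n I = MvPolynomial.restrictSupport ℝ (I : Set (Fin n →₀ ℕ)) := by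
  rw [MvPolynomial.restrictSupport_eq_span, PIdx]
  congr 1
  ext q
  simp [eq_comm]

variable (I) in
noncomputable def coeffVec (p : MvPolynomial (Fin n) ℝ) : EuclideanSpace ℝ I :=
  WithLp.toLp 2 fun i => MvPolynomial.coeff i.1 p

theorem riesz_eq_inner (g : I → ℝ) (p : MvPolynomial (Fin n) ℝ) :
    riesz n I g p = ⟪coeffVec I p, WithLp.toLp 2 g⟫ := by
  simp [riesz, coeffVec, PiLp.inner_apply]

theorem eval_eq_sum_coeffVec_mul_monoF {p : MvPolynomial (Fin n) ℝ} (hp : p ∈ PIdx n I)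
    (t : EuclideanSpace ℝ (Fin n)) :
    MvPolynomial.eval (fun k => t k) p = ∑ i : I, coeffVec I p i * monoF n i t := by
  rw [PIdx_eq_restrictSupport, MvPolynomial.mem_restrictSupport_iff] at hp
  rw [MvPolynomial.eval_eq']
  change _ = ∑ i : I, MvPolynomial.coeff i.1 p * ∏ k, t k ^ i.1 k
  rw [Finset.sum_coe_sort I fun d => MvPolynomial.coeff d p * ∏ k, t k ^ d k]
  refine Finset.sum_subset (fun i hi => hp hi) fun i _ hi => ?_
  simp [MvPolynomial.notMem_support_iff.1 hi]

theorem exists_mem_PIdx_coeffVec_eq (c : EuclideanSpace ℝ I) :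
    ∃ p ∈ PIdx n I, coeffVec I p = c := by
  refine ⟨∑ i : I, MvPolynomial.monomial i.1 (c i), ?_, ?_⟩
  · rw [PIdx_eq_restrictSupport]
    exact Submodule.sum_mem _ fun i _ => (MvPolynomial.monomial_mem_restrictSupport ℝ).2 (.inl i.2)
  · ext j
    simp [coeffVec, MvPolynomial.coeff_sum, MvPolynomial.coeff_monomial]

theorem MvPolynomial.ae_eval_ofLp_ne_zero {p : MvPolynomial (Fin n) ℝ} (hp : p ≠ 0) :
    ∀ᵐ t : EuclideanSpace ℝ (Fin n), eval (fun k => t k) p ≠ 0 :=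
  (PiLp.volume_preserving_ofLp (Fin n)).quasiMeasurePreserving.ae (ae_eval_ne_zero hp)

theorem RegularSet.subset_support_restrict {T : Set (EuclideanSpace ℝ (Fin n))}
    (hT : RegularSet n T) : T ⊆ (volume.restrict T).support := fun t ht => by
  refine Metric.nhds_basis_ball.mem_measureSupport.2 fun ε hε => ?_
  refine (hT.2 t ht ε hε).trans_le ((measure_mono fun x hx => ?_).trans
    (Measure.le_restrict_apply _ _))
  exact ⟨by simpa [dist_eq_norm] using hx.2, hx.1⟩

end Polynomial

theorem stmt_13_general (n : ℕ) (T : Set (EuclideanSpace ℝ (Fin n))) (hT : IsClosed T)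
    (hTreg : RegularSet n T)
    (I : Finset (Fin n →₀ ℕ))
    (h0I : (0 : Fin n →₀ ℕ) ∈ I) (g : I → ℝ) (hg0 : g ⟨0, h0I⟩ = 1) :
    (∃ f : EuclideanSpace ℝ (Fin n) → ℝ,
      Integrable f (volume.restrict T) ∧
      (0 ≤ᵐ[volume.restrict T] f) ∧
      (∀ i : I, Integrable (fun t => monoF n i t * f t) (volume.restrict T)) ∧
      (∀ i : I, ∫ t in T, monoF n i t * f t = g i)) ↔
    (∀ p ∈ PIdx n I, p ≠ 0 →
      (∀ t ∈ T, 0 ≤ MvPolynomial.eval (fun k => t k) p) → 0 < riesz n I g p) := by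
  set φ : I → EuclideanSpace ℝ (Fin n) → ℝ := fun i => monoF n i
  have hS : ∀ᵐ t ∂volume.restrict T, t ∈ T := ae_restrict_mem hT.measurableSet
  constructor
  · rintro ⟨f, -, hf0, hfi, hfg⟩ p hpI hp0 hpT
    have hmom : moments (volume.restrict T) φ f = WithLp.toLp 2 g := by
      ext i; exact hfg i
    have hf_ne : ¬ f =ᵐ[volume.restrict T] 0 := fun h => by
      simpa [integral_congr_ae h] using (hfg ⟨0, h0I⟩).trans hg0
    rw [riesz_eq_inner, ← hmom, real_inner_comm]
    refine inner_moments_pos hS (fun t ht => ?_) ?_ ⟨hf0, hfi⟩ hf_ne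
    · rw [← eval_eq_sum_coeffVec_mul_monoF hpI]; exact hpT t ht
    · filter_upwards [ae_restrict_of_ae (MvPolynomial.ae_eval_ofLp_ne_zero hp0)] with t ht
      rwa [← eval_eq_sum_coeffVec_mul_monoF hpI]
  · intro hpos
    obtain ⟨f, ⟨hf0, hfi⟩, hfg⟩ : WithLp.toLp 2 g ∈ momentCone (volume.restrict T) φ := by
      refine mem_momentCone_of_inner_pos (fun i : I => continuous_monoF i.1) hS
        hTreg.subset_support_restrict fun c hc hc0 => ?_
      obtain ⟨p, hpI, rfl⟩ := exists_mem_PIdx_coeffVec_eq c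
      rw [← riesz_eq_inner]
      refine hpos p hpI (by rintro rfl; exact hc0 (by ext; simp [coeffVec])) fun t ht => ?_
      rw [eval_eq_sum_coeffVec_mul_monoF hpI]; exact hc t ht
    refine ⟨f, ?_, hf0, hfi, fun i => congrArg (· i) hfg⟩
    simpa [φ] using hfi ⟨0, h0I⟩

/-- Let `T ⊆ ℝⁿ` be a closed regular set, `I` a finite regular set of
multi-indices, and `g = (g_i)_{i∈I}` with `g_0 = 1`. The following are equivalent:
(a) there exists `f ∈ L¹(T, dt)`, `f ≥ 0` a.e., with `∫_T |t^i| f dt < ∞` and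
`∫_T t^i f dt = g_i` for all `i ∈ I`;
(b) the Riesz functional satisfies `φ_g p > 0` for every nonzero `p ∈ P_I` with `p ≥ 0`
on `T`. -/
theorem stmt_13 (n : ℕ) (T : Set (EuclideanSpace ℝ (Fin n))) (hT : IsClosed T)
    (hTreg : RegularSet n T)
    (I : Finset (Fin n →₀ ℕ)) (hIreg : RegularIdx n I)
    (h0I : (0 : Fin n →₀ ℕ) ∈ I) (g : I → ℝ) (hg0 : g ⟨0, h0I⟩ = 1) :
    (∃ f : EuclideanSpace ℝ (Fin n) → ℝ,
      Integrable f (volume.restrict T) ∧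
      (0 ≤ᵐ[volume.restrict T] f) ∧
      (∀ i : I, Integrable (fun t => monoF n i t * f t) (volume.restrict T)) ∧
      (∀ i : I, ∫ t in T, monoF n i t * f t = g i)) ↔
    (∀ p ∈ PIdx n I, p ≠ 0 →
      (∀ t ∈ T, 0 ≤ MvPolynomial.eval (fun k => t k) p) → 0 < riesz n I g p) :=
  stmt_13_general n T hT hTreg I h0I g hg0
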